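/- arXiv:2105.00323 — 3 statements merged into one kernel-verified Lean document; each statement's English description precedes it below -/
import Mathlib

section
/- For δ₁, δ₂ ∈ [0,1) with δ₂ ≥ δ₁ and ε₂ = 1 (no side-information at the weaker receiver), the region {(R₁,R₂) ≥ 0 : ((1-δ₂)/(1-δ₁))R₁ + R₂ ≤ 1-δ₂, R₁ + ε₁R₂ ≤ 1-δ₁} equals the region {(R₁,R₂) ≥ 0 : R₁/(1-δ₁) + R₂/(1-δ₂) ≤ 1} for every ε₁ ∈ [0,1], i.e., additional side-information at the stronger receiver does not enlarge the region when ε₂ = 1. -/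
/-! Dividing the first constraint by `1 - δ₂` turns it into `R₁/(1-δ₁) + R₂/(1-δ₂) ≤ 1`, and
since `1 - δ₂ ≤ 1 - δ₁` and `ε₁ ≤ 1` this already forces `R₁ + ε₁ R₂ ≤ R₁ + R₂ ≤ 1 - δ₁`. -/

lemma div_mul_add_le_iff_div_add_div_le_one {a b x y : ℝ} (ha : 0 < a) (hb : 0 < b) :
    b / a * x + y ≤ b ↔ x / a + y / b ≤ 1 := by
  rw [← div_le_div_iff_of_pos_right hb, div_self hb.ne']
  have : (b / a * x + y) / b = x / a + y / b := by field_simp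
  rw [this]

lemma add_le_of_div_add_div_le_one {a b x y : ℝ} (hb : 0 < b) (hba : b ≤ a) (hy : 0 ≤ y)
    (h : x / a + y / b ≤ 1) : x + y ≤ a := by
  have ha : 0 < a := hb.trans_le hba
  have hy' : y / a ≤ y / b := div_le_div_of_nonneg_left hy hb hba
  rw [← div_le_one ha, add_div]
  linarith

theorem region_eq_no_side_info_general (δ₁ δ₂ : ℝ)
    (hδ : δ₁ ≤ δ₂) (hδ₂ : δ₂ < 1) :
    ∀ ε₁ ∈ Set.Icc (0:ℝ) 1,
      {p : ℝ × ℝ | 0 ≤ p.1 ∧ 0 ≤ p.2 ∧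
        ((1 - δ₂) / (1 - δ₁)) * p.1 + p.2 ≤ 1 - δ₂ ∧
        p.1 + ε₁ * p.2 ≤ 1 - δ₁} =
      {p : ℝ × ℝ | 0 ≤ p.1 ∧ 0 ≤ p.2 ∧
        p.1 / (1 - δ₁) + p.2 / (1 - δ₂) ≤ 1} := by
  rintro ε₁ ⟨-, hε₁⟩
  have hb : 0 < 1 - δ₂ := by linarith
  have hba : 1 - δ₂ ≤ 1 - δ₁ := by linarith
  ext ⟨x, y⟩
  simp only [Set.mem_ofPred_eq, div_mul_add_le_iff_div_add_div_le_one (hb.trans_le hba) hb]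
  constructor
  · rintro ⟨hx, hy, h, -⟩
    exact ⟨hx, hy, h⟩
  · rintro ⟨hx, hy, h⟩
    refine ⟨hx, hy, h, ?_⟩
    calc x + ε₁ * y ≤ x + y := by gcongr; exact mul_le_of_le_one_left hy hε₁
      _ ≤ 1 - δ₁ := add_le_of_div_add_div_le_one hb hba hy h

theorem region_eq_no_side_info (δ₁ δ₂ : ℝ)
    (hδ₁ : 0 ≤ δ₁) (hδ : δ₁ ≤ δ₂) (hδ₂ : δ₂ < 1) :
    ∀ ε₁ ∈ Set.Icc (0:ℝ) 1,
      {p : ℝ × ℝ | 0 ≤ p.1 ∧ 0 ≤ p.2 ∧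
        ((1 - δ₂) / (1 - δ₁)) * p.1 + p.2 ≤ 1 - δ₂ ∧
        p.1 + ε₁ * p.2 ≤ 1 - δ₁} =
      {p : ℝ × ℝ | 0 ≤ p.1 ∧ 0 ≤ p.2 ∧
        p.1 / (1 - δ₁) + p.2 / (1 - δ₂) ≤ 1} :=
  region_eq_no_side_info_general δ₁ δ₂ hδ hδ₂
end

section
/- For 0 ≤ δ₁ ≤ δ₂ < 1, ε₁ ∈ [0,1], ε₂ ∈ [0,1), m > 0, with t_a = ε₁m/(1-δ₁), t_b = m/(1-δ₂) - t_a, and t₂ = ε₂((1-δ₁)-ε₁(1-δ₂))m/((1-ε₂)(1-δ₁)(1-δ₂)), the total time satisfies t_a + t_b + t₂ = ((1-δ₁) - ε₁ε₂(1-δ₂))m/((1-ε₂)(1-δ₁)(1-δ₂)), and consequently with η = ((1-δ₁)-ε₁(1-δ₂))/((1-ε₂)(1-δ₂)), the rates R₁ = ηm/(t_a+t_b+t₂) and R₂ = m/(t_a+t_b+t₂) equal the corner point R₁ = ((1-δ₁)-ε₁(1-δ₂))/(1-ε₁ε₂(1-δ₂)/(1-δ₁)), R₂ = (1-ε₂)(1-δ₂)/(1-ε₁ε₂(1-δ₂)/(1-δ₁)).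 -/
/-!
Putting `a = 1 - δ₁`, `b = 1 - δ₂`, `c = 1 - ε₂`, the first phase lasts `m / b` and the
second `ε₂ (a - ε₁ b) m / (c a b)`, so the total time is `(a - ε₁ ε₂ b) m / (c a b)`. The rates
are then `m / T = c b / (1 - ε₁ ε₂ b / a)` and `η m / T = η · (m / T)`, where `η c b = a - ε₁ b`.
The total time is nonzero because `ε₁ ε₂ b ≤ max 0 (ε₁ b) < a`.
-/

section TwoPhase

variable {K : Type*} [Field K] {a b ε₁ ε₂ m : K}

theorem two_phase_time_add (ha : a ≠ 0) (hb : b ≠ 0) (hc : 1 - ε₂ ≠ 0) :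
    ε₁ * m / a + (m / b - ε₁ * m / a) + ε₂ * (a - ε₁ * b) * m / ((1 - ε₂) * a * b) =
      (a - ε₁ * ε₂ * b) * m / ((1 - ε₂) * a * b) := by
  field_simp
  ring

theorem div_two_phase_time (ha : a ≠ 0) (hb : b ≠ 0) (hc : 1 - ε₂ ≠ 0)
    (hT : a - ε₁ * ε₂ * b ≠ 0) (hm : m ≠ 0) :
    m / ((a - ε₁ * ε₂ * b) * m / ((1 - ε₂) * a * b)) =
      (1 - ε₂) * b / (1 - ε₁ * ε₂ * b / a) := by
  have hT' : 1 - ε₁ * ε₂ * b / a ≠ 0 := by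
    rw [one_sub_div ha]
    exact div_ne_zero hT ha
  field_simp

end TwoPhase

theorem mul_lt_of_nonneg_of_le_one_of_lt {α : Type*} [Field α] [LinearOrder α]
    [IsStrictOrderedRing α] {t x a : α}
    (ht₀ : 0 ≤ t) (ht₁ : t ≤ 1) (hx : x < a) (ha : 0 < a) : t * x < a := by
  rcases le_total 0 x with h | h
  · nlinarith
  · nlinarith

theorem two_phase_total_time_general (δ₁ δ₂ ε₁ ε₂ m : ℝ)
    (hδ : δ₁ ≤ δ₂) (hδ₂ : δ₂ < 1)
    (hε₂0 : 0 ≤ ε₂) (hε₂ : ε₂ < 1)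
    (hm : 0 < m) (hpos : ε₁ * (1 - δ₂) < 1 - δ₁) :
    let t_a := ε₁ * m / (1 - δ₁)
    let t_b := m / (1 - δ₂) - t_a
    let t₂ := ε₂ * ((1 - δ₁) - ε₁ * (1 - δ₂)) * m / ((1 - ε₂) * (1 - δ₁) * (1 - δ₂))
    let η := ((1 - δ₁) - ε₁ * (1 - δ₂)) / ((1 - ε₂) * (1 - δ₂))
    t_a + t_b + t₂ = ((1 - δ₁) - ε₁ * ε₂ * (1 - δ₂)) * m / ((1 - ε₂) * (1 - δ₁) * (1 - δ₂)) ∧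
    η * m / (t_a + t_b + t₂) = ((1 - δ₁) - ε₁ * (1 - δ₂)) / (1 - ε₁ * ε₂ * (1 - δ₂) / (1 - δ₁)) ∧
    m / (t_a + t_b + t₂) = (1 - ε₂) * (1 - δ₂) / (1 - ε₁ * ε₂ * (1 - δ₂) / (1 - δ₁)) := by
  intro t_a t_b t₂ η
  have hb : 1 - δ₂ ≠ 0 := by linarith
  have ha : 0 < 1 - δ₁ := by linarith
  have hc : 1 - ε₂ ≠ 0 := by linarith
  have hT : (1 - δ₁) - ε₁ * ε₂ * (1 - δ₂) ≠ 0 := by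
    have hlt := mul_lt_of_nonneg_of_le_one_of_lt hε₂0 hε₂.le hpos ha
    linarith
  have htime := two_phase_time_add (ε₁ := ε₁) (m := m) ha.ne' hb hc
  have hrate₂ := div_two_phase_time ha.ne' hb hc hT hm.ne'
  refine ⟨htime, ?_, htime ▸ hrate₂⟩
  rw [mul_div_assoc, htime, hrate₂, ← mul_div_assoc]
  congr 1
  simp only [η]
  field_simp

theorem two_phase_total_time (δ₁ δ₂ ε₁ ε₂ m : ℝ)
    (hδ₁ : 0 ≤ δ₁) (hδ : δ₁ ≤ δ₂) (hδ₂ : δ₂ < 1)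
    (hε₁ : ε₁ ∈ Set.Icc (0:ℝ) 1) (hε₂0 : 0 ≤ ε₂) (hε₂ : ε₂ < 1)
    (hm : 0 < m) (hpos : ε₁ * (1 - δ₂) < 1 - δ₁) :
    let t_a := ε₁ * m / (1 - δ₁)
    let t_b := m / (1 - δ₂) - t_a
    let t₂ := ε₂ * ((1 - δ₁) - ε₁ * (1 - δ₂)) * m / ((1 - ε₂) * (1 - δ₁) * (1 - δ₂))
    let η := ((1 - δ₁) - ε₁ * (1 - δ₂)) / ((1 - ε₂) * (1 - δ₂))
    t_a + t_b + t₂ = ((1 - δ₁) - ε₁ * ε₂ * (1 - δ₂)) * m / ((1 - ε₂) * (1 - δ₁) * (1 - δ₂)) ∧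
    η * m / (t_a + t_b + t₂) = ((1 - δ₁) - ε₁ * (1 - δ₂)) / (1 - ε₁ * ε₂ * (1 - δ₂) / (1 - δ₁)) ∧
    m / (t_a + t_b + t₂) = (1 - ε₂) * (1 - δ₂) / (1 - ε₁ * ε₂ * (1 - δ₂) / (1 - δ₁)) :=
  two_phase_total_time_general δ₁ δ₂ ε₁ ε₂ m hδ hδ₂ hε₂0 hε₂ hm hpos
end

section
/- For 0 ≤ δ₁ ≤ δ₂ < 1 and ε₁, ε₂ ∈ [0,1], the delayed-CSIT outer-bound region {(R₁,R₂) ≥ 0 : Rᵢ ≤ 1-δᵢ, εᵢ̄(1-δᵢ̄)/(1-δ₁δ₂)·Rᵢ + Rᵢ̄ ≤ 1-δᵢ̄, i=1,2} contains the no-CSIT region {(R₁,R₂) ≥ 0 : ε₂((1-δ₂)/(1-δ₁))R₁ + R₂ ≤ 1-δ₂, R₁ + ε₁R₂ ≤ 1-δ₁}, i.e., delayed feedback can only enlarge the (outer-bound) region. -/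
/-! Each constraint of the no-CSIT region has a coefficient at least as large as the
corresponding constraint of the delayed-CSIT region, because `1 - δ₁ ≤ 1 - δ₁ δ₂`. Since the
rates are nonnegative, shrinking a coefficient (possibly to `0`, which yields the single-user
bounds) only weakens a constraint. -/

lemma one_sub_le_one_sub_mul {a b : ℝ} (ha : 0 ≤ a) (hb : b ≤ 1) : 1 - a ≤ 1 - a * b := by
  linarith [mul_le_of_le_one_right ha hb]

lemma div_one_sub_mul_le_one {a b : ℝ} (ha : 0 ≤ a) (ha₁ : a < 1) (hb : b ≤ 1) :
    (1 - a) / (1 - a * b) ≤ 1 :=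
  div_le_one_of_le₀ (one_sub_le_one_sub_mul ha hb) (by linarith [one_sub_le_one_sub_mul ha hb])

lemma div_one_sub_mul_le_div_one_sub {a b c : ℝ} (hc : 0 ≤ c) (ha : 0 ≤ a) (ha₁ : a < 1)
    (hb : b ≤ 1) : c / (1 - a * b) ≤ c / (1 - a) :=
  div_le_div_of_nonneg_left hc (by linarith) (one_sub_le_one_sub_mul ha hb)

lemma mul_add_le_of_mul_add_le {c c' x y b : ℝ} (hc : c' ≤ c) (hx : 0 ≤ x)
    (h : c * x + y ≤ b) : c' * x + y ≤ b := by
  linarith [mul_le_mul_of_nonneg_right hc hx]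

theorem noCSIT_subset_delayed (δ₁ δ₂ ε₁ ε₂ : ℝ)
    (hδ₁ : 0 ≤ δ₁) (hδ : δ₁ ≤ δ₂) (hδ₂ : δ₂ < 1)
    (hε₁ : ε₁ ∈ Set.Icc (0:ℝ) 1) (hε₂ : ε₂ ∈ Set.Icc (0:ℝ) 1) :
    {p : ℝ × ℝ | 0 ≤ p.1 ∧ 0 ≤ p.2 ∧
      ε₂ * ((1 - δ₂) / (1 - δ₁)) * p.1 + p.2 ≤ 1 - δ₂ ∧
      p.1 + ε₁ * p.2 ≤ 1 - δ₁} ⊆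
    {p : ℝ × ℝ | 0 ≤ p.1 ∧ 0 ≤ p.2 ∧
      p.1 ≤ 1 - δ₁ ∧ p.2 ≤ 1 - δ₂ ∧
      (ε₂ * (1 - δ₂) / (1 - δ₁ * δ₂)) * p.1 + p.2 ≤ 1 - δ₂ ∧
      (ε₁ * (1 - δ₁) / (1 - δ₁ * δ₂)) * p.2 + p.1 ≤ 1 - δ₁} := by
  rintro p ⟨hp₁, hp₂, hrow₂, hrow₁⟩
  have hδ₁' : δ₁ < 1 := hδ.trans_lt hδ₂
  have hcoef₂ : ε₂ * (1 - δ₂) / (1 - δ₁ * δ₂) ≤ ε₂ * ((1 - δ₂) / (1 - δ₁)) := by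
    rw [mul_div_assoc]
    exact mul_le_mul_of_nonneg_left
      (div_one_sub_mul_le_div_one_sub (by linarith) hδ₁ hδ₁' hδ₂.le) hε₂.1
  have hcoef₁ : ε₁ * (1 - δ₁) / (1 - δ₁ * δ₂) ≤ ε₁ := by
    rw [mul_div_assoc]
    exact mul_le_of_le_one_right hε₁.1 (div_one_sub_mul_le_one hδ₁ hδ₁' hδ₂.le)
  have hcoef₂_nonneg : 0 ≤ ε₂ * ((1 - δ₂) / (1 - δ₁)) :=
    mul_nonneg hε₂.1 (div_nonneg (by linarith) (by linarith))
  rw [add_comm] at hrow₁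
  rw [Set.mem_ofPred_eq]
  refine ⟨hp₁, hp₂, ?_, ?_, mul_add_le_of_mul_add_le hcoef₂ hp₁ hrow₂,
    mul_add_le_of_mul_add_le hcoef₁ hp₂ hrow₁⟩
  · simpa using mul_add_le_of_mul_add_le hε₁.1 hp₂ hrow₁
  · simpa using mul_add_le_of_mul_add_le hcoef₂_nonneg hp₁ hrow₂
end
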